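/- Let A be a real m×n matrix and let C ⊆ ℝⁿ and Q ⊆ ℝᵐ be nonempty closed convex cones. Suppose that (i) ker(Aᵀ) ∩ Q⁻ = {0}, and (ii) Aᵀ(Q⁻) ∩ (−C⁻) = {0}, where Q⁻ = {v ∈ ℝᵐ : ⟨v, q⟩ ≤ 0 for all q ∈ Q} and C⁻ = {v ∈ ℝⁿ : ⟨v, c⟩ ≤ 0 for all c ∈ C} are the negative dual cones. Then the solution set S = {x ∈ C : Ax ∈ Q} is nonempty and there exists τ > 0 such that dist(x, S) ≤ τ·[dist(Ax, Q) + dist(x, C)] for every x ∈ ℝⁿ. -/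

import Mathlib

open Metric Set Pointwise

/-- The negative dual cone of a set `K`. -/
def negDual {n : ℕ} (K : Set (EuclideanSpace ℝ (Fin n))) : Set (EuclideanSpace ℝ (Fin n)) :=
  {v | ∀ k ∈ K, (inner ℝ v k : ℝ) ≤ 0}

lemma negDual_zero {n : ℕ} (K : Set (EuclideanSpace ℝ (Fin n))) : (0 : _) ∈ negDual K := by
  intro k _; simp

lemma negDual_smul {n : ℕ} (K : Set (EuclideanSpace ℝ (Fin n))) {t : ℝ} (ht : 0 ≤ t)
    {v} (hv : v ∈ negDual K) : t • v ∈ negDual K := by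
  intro k hk
  rw [real_inner_smul_left]
  exact mul_nonpos_of_nonneg_of_nonpos ht (hv k hk)

lemma negDual_add {n : ℕ} (K : Set (EuclideanSpace ℝ (Fin n))) {v w}
    (hv : v ∈ negDual K) (hw : w ∈ negDual K) : v + w ∈ negDual K := by
  intro k hk
  rw [inner_add_left]
  exact add_nonpos (hv k hk) (hw k hk)

lemma negDual_closed {n : ℕ} (K : Set (EuclideanSpace ℝ (Fin n))) : IsClosed (negDual K) := by
  have : negDual K = ⋂ k ∈ K, {v : EuclideanSpace ℝ (Fin n) | (inner ℝ v k : ℝ) ≤ 0} := by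
    ext v; simp [negDual]
  rw [this]
  exact isClosed_biInter fun k _ =>
    isClosed_le (Continuous.inner continuous_id continuous_const) continuous_const

/-- sum of two elements of a convex cone (given as a set). -/
lemma cone_add_mem {n : ℕ} {K : Set (EuclideanSpace ℝ (Fin n))} (hcv : Convex ℝ K)
    (hcone : ∀ t : ℝ, 0 < t → t • K ⊆ K) {x y} (hx : x ∈ K) (hy : y ∈ K) : x + y ∈ K := by
  have h2 : (2:ℝ) • ((1/2 : ℝ) • x + (1/2 : ℝ) • y) ∈ K :=
    hcone 2 two_pos (smul_mem_smul_set (hcv hx hy (by norm_num) (by norm_num) (by norm_num)))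
  have heq : (2:ℝ) • ((1/2 : ℝ) • x + (1/2 : ℝ) • y) = x + y := by
    rw [smul_add, smul_smul, smul_smul]; norm_num
  rwa [heq] at h2

/-- bipolar-type separation: if `w` pairs nonpositively with everything in `negDual K`,
then `w ∈ K`. -/
lemma mem_of_forall_negDual {n : ℕ} (K : Set (EuclideanSpace ℝ (Fin n))) (hne : K.Nonempty)
    (hcl : IsClosed K) (hcv : Convex ℝ K) (hcone : ∀ t : ℝ, 0 < t → t • K ⊆ K)
    {w} (hw : ∀ y ∈ negDual K, (inner ℝ y w : ℝ) ≤ 0) : w ∈ K := by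
  by_contra hwK
  let KC : ConvexCone ℝ (EuclideanSpace ℝ (Fin n)) :=
    { carrier := K
      smul_mem' := fun c hc x hx => hcone c hc (smul_mem_smul_set hx)
      add_mem' := fun x hx y hy => cone_add_mem hcv hcone hx hy }
  obtain ⟨y, hy1, hy2⟩ :=
    ProperCone.hyperplane_separation' (⟨KC.toPointedCone (.of_nonempty_of_isClosed hne hcl), hcl⟩ : ProperCone ℝ _) hwK
  have hyneg : -y ∈ negDual K := by
    intro k hk
    rw [inner_neg_left, neg_nonpos, real_inner_comm]
    exact hy1 k hk
  have := hw _ hyneg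
  rw [inner_neg_left, neg_nonpos] at this
  linarith [real_inner_comm w y]

set_option maxHeartbeats 1000000 in
theorem stmt13 {m n : ℕ} (A : Matrix (Fin m) (Fin n) ℝ)
    (C : Set (EuclideanSpace ℝ (Fin n))) (Q : Set (EuclideanSpace ℝ (Fin m)))
    (hCne : C.Nonempty) (hCcl : IsClosed C) (hCcv : Convex ℝ C)
    (hCcone : ∀ t : ℝ, 0 < t → t • C ⊆ C)
    (hQne : Q.Nonempty) (hQcl : IsClosed Q) (hQcv : Convex ℝ Q)
    (hQcone : ∀ t : ℝ, 0 < t → t • Q ⊆ Q)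
    (hker : {v : EuclideanSpace ℝ (Fin m) | Matrix.toEuclideanLin A.transpose v = 0} ∩ negDual Q
              = {0})
    (himg : (Matrix.toEuclideanLin A.transpose '' negDual Q) ∩ (-(negDual C)) = {0}) :
    {x | x ∈ C ∧ Matrix.toEuclideanLin A x ∈ Q}.Nonempty ∧
    ∃ τ : ℝ, 0 < τ ∧ ∀ x : EuclideanSpace ℝ (Fin n),
      Metric.infDist x {x | x ∈ C ∧ Matrix.toEuclideanLin A x ∈ Q}
        ≤ τ * (Metric.infDist (Matrix.toEuclideanLin A x) Q + Metric.infDist x C) := by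
  set T := Matrix.toEuclideanLin A with hT
  set T' := Matrix.toEuclideanLin A.transpose with hT'
  have hTc : Continuous T := T.continuous_of_finiteDimensional
  have hT'c : Continuous T' := T'.continuous_of_finiteDimensional
  -- adjoint identity
  have hadj : ∀ (y : EuclideanSpace ℝ (Fin m)) (x : EuclideanSpace ℝ (Fin n)),
      (inner ℝ (T' y) x : ℝ) = (inner ℝ y (T x) : ℝ) := by
    have hAT : A.transpose = A.conjTranspose := by
      ext i j; simp [Matrix.conjTranspose_apply]
    intro y x
    rw [hT', hAT, Matrix.toEuclideanLin_conjTranspose_eq_adjoint]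
    exact LinearMap.adjoint_inner_left _ _ _
  -- 0 belongs to C and to Q
  have h0C : (0 : EuclideanSpace ℝ (Fin n)) ∈ C :=
    mem_of_forall_negDual C hCne hCcl hCcv hCcone (by intro y _; simp)
  have h0Q : (0 : EuclideanSpace ℝ (Fin m)) ∈ Q :=
    mem_of_forall_negDual Q hQne hQcl hQcv hQcone (by intro y _; simp)
  set S := {x : EuclideanSpace ℝ (Fin n) | x ∈ C ∧ T x ∈ Q} with hS
  have hSne : S.Nonempty := ⟨0, h0C, by rw [map_zero]; exact h0Q⟩
  refine ⟨hSne, ?_⟩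
  have hScl : IsClosed S := hCcl.inter (hQcl.preimage hTc)
  have hScv : Convex ℝ S := hCcv.inter (hQcv.linear_preimage T)
  have hSsmul : ∀ t : ℝ, 0 < t → ∀ p ∈ S, t • p ∈ S := fun t ht p hp =>
    ⟨hCcone t ht (smul_mem_smul_set hp.1), by
      rw [map_smul]; exact hQcone t ht (smul_mem_smul_set hp.2)⟩
  have hSadd : ∀ p ∈ S, ∀ s ∈ S, p + s ∈ S := fun p hp s hs =>
    ⟨cone_add_mem hCcv hCcone hp.1 hs.1, by
      rw [map_add]; exact cone_add_mem hQcv hQcone hp.2 hs.2⟩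
  -- the key injectivity
  have hkey : ∀ (y : EuclideanSpace ℝ (Fin m)) (z : EuclideanSpace ℝ (Fin n)),
      y ∈ negDual Q → z ∈ negDual C → T' y + z = 0 → y = 0 ∧ z = 0 := by
    intro y z hy hz hsum
    have hTy : T' y = -z := eq_neg_of_add_eq_zero_left hsum
    have h1 : T' y ∈ (T' '' negDual Q) ∩ (-(negDual C)) := by
      refine ⟨⟨y, hy, rfl⟩, ?_⟩
      rw [hTy, Set.mem_neg, neg_neg]
      exact hz
    rw [himg] at h1
    have hTy0 : T' y = 0 := h1
    have hz0 : z = 0 := by rw [hTy0] at hTy; simpa using hTy.symm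
    have h2 : y ∈ ({v : EuclideanSpace ℝ (Fin m) | T' v = 0} ∩ negDual Q) := ⟨hTy0, hy⟩
    rw [hker] at h2
    exact ⟨h2, hz0⟩
  -- the quantitative lower bound σ
  have hσex : ∃ σ : ℝ, 0 < σ ∧ ∀ p : EuclideanSpace ℝ (Fin m) × EuclideanSpace ℝ (Fin n),
      p.1 ∈ negDual Q → p.2 ∈ negDual C → σ * ‖p‖ ≤ ‖T' p.1 + p.2‖ := by
    set W : Set (EuclideanSpace ℝ (Fin m) × EuclideanSpace ℝ (Fin n)) :=
      {p | p.1 ∈ negDual Q ∧ p.2 ∈ negDual C} with hW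
    have hWcl : IsClosed W := by
      have : W = (Prod.fst ⁻¹' negDual Q) ∩ (Prod.snd ⁻¹' negDual C) := rfl
      rw [this]
      exact ((negDual_closed Q).preimage continuous_fst).inter
        ((negDual_closed C).preimage continuous_snd)
    set K1 := W ∩ sphere (0 : EuclideanSpace ℝ (Fin m) × EuclideanSpace ℝ (Fin n)) 1 with hK1
    have hLnz : ∀ p ∈ K1, T' p.1 + p.2 ≠ 0 := by
      rintro p ⟨⟨h1, h2⟩, hs⟩ h0
      obtain ⟨hy0, hz0⟩ := hkey p.1 p.2 h1 h2 h0
      have : p = 0 := Prod.ext hy0 hz0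
      rw [mem_sphere_iff_norm, this] at hs
      simp at hs
    rcases Set.eq_empty_or_nonempty K1 with hK1e | hK1ne
    · refine ⟨1, one_pos, fun p hp1 hp2 => ?_⟩
      by_cases hp0 : p = 0
      · simp [hp0]
      · exfalso
        have hpn : (0:ℝ) < ‖p‖ := norm_pos_iff.mpr hp0
        have : (‖p‖⁻¹ • p) ∈ K1 := by
          constructor
          · exact ⟨negDual_smul Q (by positivity) hp1, negDual_smul C (by positivity) hp2⟩
          · rw [mem_sphere_iff_norm, sub_zero, norm_smul]
            simp [abs_of_pos (inv_pos.mpr hpn), inv_mul_cancel₀ (ne_of_gt hpn)]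
        rw [hK1e] at this
        exact this
    · have hK1cp : IsCompact K1 := (isCompact_sphere 0 1).inter_left hWcl
      have hcont : ContinuousOn (fun p : EuclideanSpace ℝ (Fin m) × EuclideanSpace ℝ (Fin n) =>
          ‖T' p.1 + p.2‖) K1 :=
        ((hT'c.comp continuous_fst).add continuous_snd).norm.continuousOn
      obtain ⟨p₀, hp₀K, hp₀min⟩ := hK1cp.exists_isMinOn hK1ne hcont
      set σ := ‖T' p₀.1 + p₀.2‖ with hσdef
      have hσpos : 0 < σ := norm_pos_iff.mpr (hLnz p₀ hp₀K)
      refine ⟨σ, hσpos, fun p hp1 hp2 => ?_⟩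
      by_cases hp0 : p = 0
      · simp [hp0]
      · have hpn : (0:ℝ) < ‖p‖ := norm_pos_iff.mpr hp0
        have hmem : (‖p‖⁻¹ • p) ∈ K1 := by
          constructor
          · exact ⟨negDual_smul Q (by positivity) hp1, negDual_smul C (by positivity) hp2⟩
          · rw [mem_sphere_iff_norm, sub_zero, norm_smul]
            simp [abs_of_pos (inv_pos.mpr hpn), inv_mul_cancel₀ (ne_of_gt hpn)]
        have heq : T' ((‖p‖⁻¹ • p).1) + (‖p‖⁻¹ • p).2 = ‖p‖⁻¹ • (T' p.1 + p.2) := by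
          simp [Prod.smul_fst, Prod.smul_snd, map_smul, smul_add]
        have this : σ ≤ ‖T' ((‖p‖⁻¹ • p).1) + (‖p‖⁻¹ • p).2‖ := hp₀min hmem
        rw [heq, norm_smul] at this
        rw [Real.norm_eq_abs, abs_of_pos (inv_pos.mpr hpn)] at this
        calc σ * ‖p‖ ≤ (‖p‖⁻¹ * ‖T' p.1 + p.2‖) * ‖p‖ := by nlinarith
          _ = ‖T' p.1 + p.2‖ := by field_simp
  obtain ⟨σ, hσpos, hσ⟩ := hσex
  -- the cone D of representable duals
  set D : Set (EuclideanSpace ℝ (Fin n)) :=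
    {u | ∃ y ∈ negDual Q, ∃ z ∈ negDual C, u = T' y + z} with hD
  have hDcl : IsClosed D := by
    apply IsSeqClosed.isClosed
    intro u ulim hu hconv
    choose y hy z hz hyz using hu
    set pk : ℕ → EuclideanSpace ℝ (Fin m) × EuclideanSpace ℝ (Fin n) :=
      fun k => (y k, z k) with hpk
    obtain ⟨R, hR⟩ := (hconv.norm).bddAbove_range
    have hRn : ∀ k, ‖u k‖ ≤ R := fun k => hR ⟨k, rfl⟩
    have hmemball : ∀ k, pk k ∈ closedBall (0 : _) (σ⁻¹ * R) := by
      intro k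
      rw [mem_closedBall, dist_zero_right]
      have h1 : σ * ‖pk k‖ ≤ ‖u k‖ := by
        have := hσ (pk k) (hy k) (hz k)
        rwa [← hyz k] at this
      have h2 : σ * ‖pk k‖ ≤ R := h1.trans (hRn k)
      exact (le_inv_mul_iff₀ hσpos).mpr h2
    obtain ⟨a, _, φ, hφ, hconv'⟩ :=
      (isCompact_closedBall (0 : EuclideanSpace ℝ (Fin m) × EuclideanSpace ℝ (Fin n))
        (σ⁻¹ * R)).tendsto_subseq hmemball
    have hfst : Filter.Tendsto (fun k => (pk (φ k)).1) Filter.atTop (nhds a.1) :=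
      ((continuous_fst.tendsto a).comp hconv')
    have hsnd : Filter.Tendsto (fun k => (pk (φ k)).2) Filter.atTop (nhds a.2) :=
      ((continuous_snd.tendsto a).comp hconv')
    have ha1 : a.1 ∈ negDual Q :=
      (negDual_closed Q).mem_of_tendsto hfst (Filter.Eventually.of_forall fun k => hy (φ k))
    have ha2 : a.2 ∈ negDual C :=
      (negDual_closed C).mem_of_tendsto hsnd (Filter.Eventually.of_forall fun k => hz (φ k))
    have hLa : Filter.Tendsto (fun k => T' ((pk (φ k)).1) + (pk (φ k)).2) Filter.atTop
        (nhds (T' a.1 + a.2)) :=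
      ((hT'c.tendsto a.1).comp hfst).add hsnd
    have hLu : Filter.Tendsto (fun k => T' ((pk (φ k)).1) + (pk (φ k)).2) Filter.atTop
        (nhds ulim) := by
      have : (fun k => T' ((pk (φ k)).1) + (pk (φ k)).2) = fun k => u (φ k) := by
        funext k; exact (hyz (φ k)).symm
      rw [this]
      exact hconv.comp (hφ.tendsto_atTop)
    exact ⟨a.1, ha1, a.2, ha2, (tendsto_nhds_unique hLa hLu).symm⟩
  -- polar inclusion : S-polar vectors belong to D
  have hSpolar : ∀ u : EuclideanSpace ℝ (Fin n),
      (∀ s ∈ S, (inner ℝ u s : ℝ) ≤ 0) → u ∈ D := by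
    intro u hu
    by_contra huD
    let DC : ConvexCone ℝ (EuclideanSpace ℝ (Fin n)) :=
      { carrier := D
        smul_mem' := by
          rintro c hc x ⟨y, hy, z, hz, rfl⟩
          exact ⟨c • y, negDual_smul Q hc.le hy, c • z, negDual_smul C hc.le hz, by
            rw [map_smul, smul_add]⟩
        add_mem' := by
          rintro x ⟨y, hy, z, hz, rfl⟩ x' ⟨y', hy', z', hz', rfl⟩
          exact ⟨y + y', negDual_add Q hy hy', z + z', negDual_add C hz hz', by
            rw [map_add]; abel⟩ }
    have hDne : D.Nonempty := ⟨0, 0, negDual_zero Q, 0, negDual_zero C, by simp⟩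
    obtain ⟨w, hw1, hw2⟩ :=
      ProperCone.hyperplane_separation' (⟨DC.toPointedCone (.of_nonempty_of_isClosed hDne hDcl), hDcl⟩ : ProperCone ℝ _) huD
    have hwC : -w ∈ C := by
      apply mem_of_forall_negDual C hCne hCcl hCcv hCcone
      intro z hz
      have : (0:ℝ) ≤ inner ℝ z w := hw1 z ⟨0, negDual_zero Q, z, hz, by simp⟩
      rw [inner_neg_right]
      linarith
    have hwQ : T (-w) ∈ Q := by
      apply mem_of_forall_negDual Q hQne hQcl hQcv hQcone
      intro y hy
      have h0 : (0:ℝ) ≤ inner ℝ (T' y) w := hw1 (T' y) ⟨y, hy, 0, negDual_zero C, by simp⟩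
      rw [hadj] at h0
      rw [map_neg, inner_neg_right]
      linarith
    have := hu (-w) ⟨hwC, hwQ⟩
    rw [inner_neg_right] at this
    rw [real_inner_comm] at hw2
    linarith [real_inner_comm w u]
  -- the error bound
  refine ⟨σ⁻¹ + 1, by positivity, fun x => ?_⟩
  obtain ⟨p, hpS, hproj⟩ :=
    exists_norm_eq_iInf_of_complete_convex hSne hScl.isComplete hScv x
  have hinner := (norm_eq_iInf_iff_real_inner_le_zero hScv hpS).1 hproj
  set u := x - p with hu
  have hup0 : (inner ℝ u p : ℝ) = 0 := by
    have h1 : (inner ℝ u p : ℝ) ≤ 0 := by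
      have := hinner ((2:ℝ) • p) (hSsmul 2 two_pos p hpS)
      rwa [two_smul, add_sub_cancel_right] at this
    have h2 : (0:ℝ) ≤ inner ℝ u p := by
      have := hinner ((1/2:ℝ) • p) (hSsmul (1/2) (by norm_num) p hpS)
      rw [show (1/2:ℝ) • p - p = ((1/2:ℝ) - 1) • p from by rw [sub_smul, one_smul],
        real_inner_smul_right] at this
      linarith
    linarith
  have huS : ∀ s ∈ S, (inner ℝ u s : ℝ) ≤ 0 := by
    intro s hs
    have := hinner (p + s) (hSadd p hpS s hs)
    rwa [add_sub_cancel_left] at this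
  have hdist : Metric.infDist x S = ‖u‖ := by
    rw [Metric.infDist_eq_iInf]
    simp only [dist_eq_norm]
    exact hproj.symm
  obtain ⟨y, hy, z, hz, hyz⟩ := hSpolar u huS
  have hnb : σ * ‖((y, z) : EuclideanSpace ℝ (Fin m) × EuclideanSpace ℝ (Fin n))‖ ≤ ‖u‖ := by
    have := hσ (y, z) hy hz
    rwa [← hyz] at this
  have hyb : ‖y‖ ≤ σ⁻¹ * ‖u‖ := by
    rw [le_inv_mul_iff₀ hσpos]
    have hfst : ‖y‖ ≤ ‖((y, z) : EuclideanSpace ℝ (Fin m) × EuclideanSpace ℝ (Fin n))‖ := by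
      rw [Prod.norm_def]; exact le_max_left _ _
    calc σ * ‖y‖ ≤ σ * ‖((y, z) : EuclideanSpace ℝ (Fin m) × EuclideanSpace ℝ (Fin n))‖ :=
          mul_le_mul_of_nonneg_left hfst hσpos.le
      _ ≤ ‖u‖ := hnb
  have hzb : ‖z‖ ≤ σ⁻¹ * ‖u‖ := by
    rw [le_inv_mul_iff₀ hσpos]
    have hsnd : ‖z‖ ≤ ‖((y, z) : EuclideanSpace ℝ (Fin m) × EuclideanSpace ℝ (Fin n))‖ := by
      rw [Prod.norm_def]; exact le_max_right _ _
    calc σ * ‖z‖ ≤ σ * ‖((y, z) : EuclideanSpace ℝ (Fin m) × EuclideanSpace ℝ (Fin n))‖ :=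
          mul_le_mul_of_nonneg_left hsnd hσpos.le
      _ ≤ ‖u‖ := hnb
  set dQ := Metric.infDist (T x) Q with hdQ
  set dC := Metric.infDist x C with hdC
  have hdQ0 : 0 ≤ dQ := Metric.infDist_nonneg
  have hdC0 : 0 ≤ dC := Metric.infDist_nonneg
  have hzx : (inner ℝ z x : ℝ) ≤ ‖z‖ * dC := by
    obtain ⟨c, hc, hdc⟩ := hCcl.exists_infDist_eq_dist hCne x
    have h1 : (inner ℝ z x : ℝ) = inner ℝ z (x - c) + inner ℝ z c := by
      rw [← inner_add_right]; congr 1; abel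
    have h2 : (inner ℝ z (x - c) : ℝ) ≤ ‖z‖ * ‖x - c‖ := real_inner_le_norm z (x - c)
    have h3 : ‖x - c‖ = dC := by rw [hdC, hdc, dist_eq_norm]
    have h4 : (inner ℝ z c : ℝ) ≤ 0 := hz c hc
    rw [h3] at h2
    rw [h1]
    linarith
  have hyx : (inner ℝ y (T x) : ℝ) ≤ ‖y‖ * dQ := by
    obtain ⟨q, hq, hdq⟩ := hQcl.exists_infDist_eq_dist hQne (T x)
    have h1 : (inner ℝ y (T x) : ℝ) = inner ℝ y (T x - q) + inner ℝ y q := by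
      rw [← inner_add_right]; congr 1; abel
    have h2 : (inner ℝ y (T x - q) : ℝ) ≤ ‖y‖ * ‖T x - q‖ := real_inner_le_norm y (T x - q)
    have h3 : ‖T x - q‖ = dQ := by rw [hdQ, hdq, dist_eq_norm]
    have h4 : (inner ℝ y q : ℝ) ≤ 0 := hy q hq
    rw [h3] at h2
    rw [h1]
    linarith
  have hsq : ‖u‖ * ‖u‖ ≤ σ⁻¹ * ‖u‖ * (dQ + dC) := by
    have e1 : ‖u‖ * ‖u‖ = (inner ℝ u u : ℝ) := (real_inner_self_eq_norm_mul_norm u).symm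
    have e2 : (inner ℝ u x : ℝ) = inner ℝ u u + inner ℝ u p := by
      rw [← inner_add_right]; congr 1; rw [hu]; abel
    have e3 : (inner ℝ u x : ℝ) = inner ℝ y (T x) + inner ℝ z x := by
      rw [hyz, inner_add_left, hadj]
    have hyn0 : 0 ≤ ‖y‖ := norm_nonneg y
    have hzn0 : 0 ≤ ‖z‖ := norm_nonneg z
    have h5 : (inner ℝ y (T x) : ℝ) ≤ σ⁻¹ * ‖u‖ * dQ :=
      hyx.trans (mul_le_mul_of_nonneg_right hyb hdQ0)
    have h6 : (inner ℝ z x : ℝ) ≤ σ⁻¹ * ‖u‖ * dC :=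
      hzx.trans (mul_le_mul_of_nonneg_right hzb hdC0)
    nlinarith [hup0]
  rw [hdist]
  rcases eq_or_lt_of_le (norm_nonneg u) with h0 | h0
  · rw [← h0]
    positivity
  · have : ‖u‖ ≤ σ⁻¹ * (dQ + dC) := by
      have := hsq
      nlinarith
    calc ‖u‖ ≤ σ⁻¹ * (dQ + dC) := this
      _ ≤ (σ⁻¹ + 1) * (dQ + dC) := by nlinarith [inv_pos.mpr hσpos]
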